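/- For all x > 0 and all 0 < α < 1/2, ∫_{x − z_α}^{x − z_{2α}} φ(t) dt > ∫_{x + z_α}^{∞} φ(t) dt. -/

import Mathlib

open Real MeasureTheory Set

/-- Standard normal probability density function. -/
noncomputable def stdPhi (x : ℝ) : ℝ := (Real.sqrt (2 * Real.pi))⁻¹ * Real.exp (-x ^ 2 / 2)

/-- Standard normal cumulative distribution function. -/
noncomputable def stdPhiCDF (x : ℝ) : ℝ := ∫ t in Set.Iic x, stdPhi t

/-!
With `F y = Φ (y - z_{2α}) - Φ (y - z_α) + Φ (y + z_α)` the claim reads `1 < F x`. Symmetry of `φ`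
gives `F 0 = 2 Φ z_α - Φ z_{2α} = 1`, and `F y → 1` as `y → ∞`. Divided by `φ (y - z_α) > 0`,
`F'` becomes a sum of two strictly decreasing exponentials minus `1`, so `F'` changes sign at most
once, from `+` to `-`: `F` rises and then decreases to its limit, hence `F > 1` on `(0, ∞)`.
-/

open Filter Topology ProbabilityTheory

theorem lt_of_hasDerivAt_mul_strictAnti {F p u : ℝ → ℝ} {a x L : ℝ}
    (hF : ∀ y, HasDerivAt F (p y * u y) y) (hp : ∀ y, 0 < p y) (hu : StrictAnti u)
    (ha : L ≤ F a) (hlim : Tendsto F atTop (𝓝 L)) (hax : a < x) : L < F x := by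
  have hcont : Continuous F := continuous_iff_continuousAt.2 fun y => (hF y).continuousAt
  by_cases hpos : ∀ y ∈ Ioo a x, 0 < u y
  · have hmono : StrictMonoOn F (Icc a x) :=
      strictMonoOn_of_hasDerivWithinAt_pos (convex_Icc a x) hcont.continuousOn
        (fun y _ => (hF y).hasDerivWithinAt)
        (fun y hy => mul_pos (hp y) (hpos y (by rwa [interior_Icc] at hy)))
    exact ha.trans_lt (hmono (left_mem_Icc.2 hax.le) (right_mem_Icc.2 hax.le) hax)
  · push Not at hpos
    obtain ⟨y₀, hy₀, hu₀⟩ := hpos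
    have hanti : StrictAntiOn F (Ici x) :=
      strictAntiOn_of_hasDerivWithinAt_neg (convex_Ici x) hcont.continuousOn
        (fun y _ => (hF y).hasDerivWithinAt)
        (fun y hy => by
          rw [interior_Ici] at hy
          exact mul_neg_of_pos_of_neg (hp y) ((hu (hy₀.2.trans hy)).trans_le hu₀))
    have hx1 : x + 1 ∈ Ici x := by simp
    have hlim_le : L ≤ F (x + 1) :=
      le_of_tendsto hlim <| (eventually_ge_atTop (x + 1)).mono fun y hy =>
        hanti.antitoneOn hx1 (hx1.out.trans hy) hy
    exact hlim_le.trans_lt (hanti self_mem_Ici hx1 (lt_add_one x))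

lemma stdPhi_eq_gaussianPDFReal : stdPhi = gaussianPDFReal 0 1 := by
  ext x
  simp [stdPhi, gaussianPDFReal]

lemma stdPhi_pos (x : ℝ) : 0 < stdPhi x := by
  rw [stdPhi_eq_gaussianPDFReal]
  exact gaussianPDFReal_pos 0 1 x one_ne_zero

lemma continuous_stdPhi : Continuous stdPhi := by
  unfold stdPhi
  fun_prop

lemma integrable_stdPhi : Integrable stdPhi := by
  rw [stdPhi_eq_gaussianPDFReal]
  exact integrable_gaussianPDFReal 0 1

lemma integral_stdPhi : ∫ t, stdPhi t = 1 := by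
  rw [stdPhi_eq_gaussianPDFReal]
  exact integral_gaussianPDFReal_eq_one 0 one_ne_zero

lemma stdPhi_sub_eq_mul_exp (a b y : ℝ) :
    stdPhi (y - b) = stdPhi (y - a) * exp ((b - a) * y + (a ^ 2 - b ^ 2) / 2) := by
  unfold stdPhi
  rw [mul_assoc, ← exp_add]
  ring_nf

lemma stdPhiCDF_sub_stdPhiCDF (a b : ℝ) :
    stdPhiCDF b - stdPhiCDF a = ∫ t in a..b, stdPhi t :=
  intervalIntegral.integral_Iic_sub_Iic integrable_stdPhi.integrableOn
    integrable_stdPhi.integrableOn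

lemma integral_Ioi_stdPhi (y : ℝ) : ∫ t in Ioi y, stdPhi t = 1 - stdPhiCDF y := by
  rw [← integral_stdPhi, ← intervalIntegral.integral_Iic_add_Ioi integrable_stdPhi.integrableOn
    integrable_stdPhi.integrableOn, stdPhiCDF]
  ring

lemma stdPhi_neg (x : ℝ) : stdPhi (-x) = stdPhi x := by
  simp [stdPhi]

lemma stdPhiCDF_neg (x : ℝ) : stdPhiCDF (-x) = 1 - stdPhiCDF x :=
  calc stdPhiCDF (-x) = ∫ t in Iic (-x), stdPhi (-t) := by simp only [stdPhiCDF, stdPhi_neg]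
    _ = ∫ t in Ioi x, stdPhi t := by rw [integral_comp_neg_Iic, neg_neg]
    _ = 1 - stdPhiCDF x := integral_Ioi_stdPhi x

lemma stdPhiCDF_zero : stdPhiCDF 0 = 1 / 2 := by
  have h := stdPhiCDF_neg 0
  rw [neg_zero] at h
  linarith

lemma stdPhiCDF_strictMono : StrictMono stdPhiCDF := fun a b hab => by
  have hpos : 0 < ∫ t in a..b, stdPhi t :=
    intervalIntegral.intervalIntegral_pos_of_pos integrable_stdPhi.intervalIntegrable
      stdPhi_pos hab
  linarith [stdPhiCDF_sub_stdPhiCDF a b]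

lemma hasDerivAt_stdPhiCDF (x : ℝ) : HasDerivAt stdPhiCDF (stdPhi x) x := by
  have hsplit : stdPhiCDF = fun y => stdPhiCDF 0 + ∫ t in (0 : ℝ)..y, stdPhi t := by
    ext y
    rw [← stdPhiCDF_sub_stdPhiCDF]
    ring
  rw [hsplit]
  exact ((continuous_stdPhi.integral_hasStrictDerivAt 0 x).hasDerivAt).const_add _

lemma tendsto_stdPhiCDF_atTop : Tendsto stdPhiCDF atTop (𝓝 1) := by
  have h := tendsto_setIntegral_of_monotone (μ := volume) (f := stdPhi)
    (fun y : ℝ => measurableSet_Iic) (fun _ _ => Iic_subset_Iic.2) integrable_stdPhi.integrableOn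
  rwa [iUnion_Iic, setIntegral_univ, integral_stdPhi] at h

noncomputable def bandCDF (a b y : ℝ) : ℝ :=
  stdPhiCDF (y - b) - stdPhiCDF (y - a) + stdPhiCDF (y + a)

section bandCDF

variable (a b : ℝ)

lemma hasDerivAt_bandCDF (y : ℝ) :
    HasDerivAt (bandCDF a b)
      (stdPhi (y - a) * (exp ((b - a) * y + (a ^ 2 - b ^ 2) / 2) + exp (-(2 * a) * y) - 1)) y := by
  have hcomp (c : ℝ) : HasDerivAt (fun y => stdPhiCDF (y + c)) (stdPhi (y + c)) y :=
    (hasDerivAt_stdPhiCDF (y + c)).comp_add_const y c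
  have hderiv := ((hcomp (-b)).sub (hcomp (-a))).add (hcomp a)
  simp only [← sub_eq_add_neg] at hderiv
  refine hderiv.congr_deriv ?_
  have h := stdPhi_sub_eq_mul_exp a (-a) y
  rw [sub_neg_eq_add] at h
  rw [stdPhi_sub_eq_mul_exp a b y, h]
  ring_nf

lemma bandCDF_zero : bandCDF a b 0 = 2 * stdPhiCDF a - stdPhiCDF b := by
  simp only [bandCDF, zero_sub, zero_add, stdPhiCDF_neg]
  ring

lemma tendsto_bandCDF_atTop : Tendsto (bandCDF a b) atTop (𝓝 1) := by
  have hshift (c : ℝ) : Tendsto (fun y => stdPhiCDF (y + c)) atTop (𝓝 1) :=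
    tendsto_stdPhiCDF_atTop.comp (tendsto_atTop_add_const_right _ c tendsto_id)
  have h := ((hshift (-b)).sub (hshift (-a))).add (hshift a)
  simp only [← sub_eq_add_neg, sub_self, zero_add] at h
  exact h

variable {a b}

lemma strictAnti_exp_add_exp_sub_one (hba : b < a) (ha : 0 < a) (c : ℝ) :
    StrictAnti fun y => exp ((b - a) * y + c) + exp (-(2 * a) * y) - 1 := by
  intro y z hyz
  have h₁ : exp ((b - a) * z + c) < exp ((b - a) * y + c) :=
    exp_lt_exp.2 (by nlinarith)
  have h₂ : exp (-(2 * a) * z) < exp (-(2 * a) * y) := exp_lt_exp.2 (by nlinarith)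
  linarith

end bandCDF

theorem integral_inequality
    (α : ℝ) (hα0 : 0 < α) (hα1 : α < 1 / 2)
    (za zb : ℝ) (hza : 1 - stdPhiCDF za = α) (hzb : 1 - stdPhiCDF zb = 2 * α)
    (x : ℝ) (hx : 0 < x) :
    (∫ t in (x - za)..(x - zb), stdPhi t) > ∫ t in Set.Ioi (x + za), stdPhi t := by
  have hza_pos : 0 < za :=
    stdPhiCDF_strictMono.lt_iff_lt.1 (by rw [stdPhiCDF_zero]; linarith)
  have hzb_lt : zb < za := stdPhiCDF_strictMono.lt_iff_lt.1 (by linarith)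
  have key : 1 < bandCDF za zb x :=
    lt_of_hasDerivAt_mul_strictAnti (hasDerivAt_bandCDF za zb) (fun y => stdPhi_pos (y - za))
      (strictAnti_exp_add_exp_sub_one hzb_lt hza_pos _)
      (by rw [bandCDF_zero]; linarith) (tendsto_bandCDF_atTop za zb) hx
  rw [← stdPhiCDF_sub_stdPhiCDF, integral_Ioi_stdPhi]
  unfold bandCDF at key
  linarith
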